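/- The set {1/6, 5/6} = {S₁(2/3), S₂(2/3)} is an optimal set of two-means for P, and the second quantization error is V₂ = 13/612. -/

import Mathlib

open MeasureTheory Set
open scoped ENNReal Classical

noncomputable section

/-- The similarity map `S₁(x) = x/4`. -/
def S1 (x : ℝ) : ℝ := x / 4

/-- The similarity map `S₂(x) = x/2 + 1/2`. -/
def S2 (x : ℝ) : ℝ := x / 2 + 1 / 2

/-- `P` satisfies the self-similarity relation `P = (1/4)·P∘S₁⁻¹ + (3/4)·P∘S₂⁻¹`. -/
def SelfSimilar (P : Measure ℝ) : Prop :=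
  P = (1/4 : ℝ≥0∞) • P.map S1 + (3/4 : ℝ≥0∞) • P.map S2

/-- For a word `σ` over `{1,2}` (encoded as `Fin 2`, `0 ↦ S₁`, `1 ↦ S₂`),
the composition `S_σ = S_{σ₁} ∘ ⋯ ∘ S_{σ_k}`. -/
def Sw : List (Fin 2) → ℝ → ℝ
  | [] => id
  | i :: σ => (if i = 0 then S1 else S2) ∘ Sw σ

/-- `p_σ`, the product of the probabilities `p₁ = 1/4`, `p₂ = 3/4` along `σ`. -/
def pw : List (Fin 2) → ℝ
  | [] => 1
  | i :: σ => (if i = 0 then (1:ℝ)/4 else 3/4) * pw σ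

/-- `s_σ`, the product of the contraction ratios `s₁ = 1/4`, `s₂ = 1/2` along `σ`. -/
def sw : List (Fin 2) → ℝ
  | [] => 1
  | i :: σ => (if i = 0 then (1:ℝ)/4 else 1/2) * sw σ

/-- `c(σ)`, the number of occurrences of the symbol `1` (encoded `0`) in `σ`. -/
def cnt (σ : List (Fin 2)) : ℕ := σ.count 0

/-- The cylinder interval `J_σ = S_σ([0,1])`. -/
def J (σ : List (Fin 2)) : Set ℝ := Sw σ '' Set.Icc 0 1

/-- The distortion error `V(P;α) = ∫ min_{a ∈ α} (x-a)² dP`. -/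
def distortion (P : Measure ℝ) (α : Finset ℝ) : ℝ :=
  ∫ x, sInf ((fun a => (x - a) ^ 2) '' (α : Set ℝ)) ∂P

/-- The `n`-th quantization error `V_n`. -/
def qError (P : Measure ℝ) (n : ℕ) : ℝ :=
  sInf {e | ∃ α : Finset ℝ, α.Nonempty ∧ α.card ≤ n ∧ e = distortion P α}

/-- `α` is an optimal set of `n`-means for `P`. -/
def IsOptimal (P : Measure ℝ) (n : ℕ) (α : Finset ℝ) : Prop :=
  α.Nonempty ∧ α.card ≤ n ∧ distortion P α = qError P n

/-- `q_σ := P(J_σ) · λ(J_σ)²`. -/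
def qnt (P : Measure ℝ) (σ : List (Fin 2)) : ℝ :=
  (P (J σ)).toReal * ((volume (J σ)).toReal) ^ 2


set_option maxHeartbeats 2000000

section QuantizationProof

lemma contS1 : Continuous S1 := by unfold S1; fun_prop
lemma contS2 : Continuous S2 := by unfold S2; fun_prop
lemma measS1 : Measurable S1 := contS1.measurable
lemma measS2 : Measurable S2 := contS2.measurable

lemma S1_preim (l r : ℝ) : S1 ⁻¹' (Icc l r) = Icc (4*l) (4*r) := by
  ext x; simp only [S1, mem_preimage, mem_Icc]; constructor <;> intro h <;>
    exact ⟨by linarith [h.1], by linarith [h.2]⟩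

lemma S2_preim (l r : ℝ) : S2 ⁻¹' (Icc l r) = Icc (2*l-1) (2*r-1) := by
  ext x; simp only [S2, mem_preimage, mem_Icc]; constructor <;> intro h <;>
    exact ⟨by linarith [h.1], by linarith [h.2]⟩

variable {P : Measure ℝ} [IsProbabilityMeasure P]

lemma hPA (hP : SelfSimilar P) {A : Set ℝ} (hA : MeasurableSet A) :
    P A = 1/4 * P (S1 ⁻¹' A) + 3/4 * P (S2 ⁻¹' A) := by
  conv_lhs => rw [hP]
  rw [Measure.add_apply, Measure.smul_apply, Measure.smul_apply,
    Measure.map_apply measS1 hA, Measure.map_apply measS2 hA, smul_eq_mul, smul_eq_mul]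

/-- Support lemma: P is concentrated on [0,1]. -/
lemma h01 (hP : SelfSimilar P) : P ((Icc (0:ℝ) 1)ᶜ) = 0 := by
  -- step: for t ≥ 0, P (Icc (-t) (1+t))ᶜ ≤ P (Icc (-2t) (1+2t))ᶜ
  have step : ∀ t : ℝ, 0 ≤ t →
      P ((Icc (-t) (1+t))ᶜ) ≤ P ((Icc (-(2*t)) (1+2*t))ᶜ) := by
    intro t ht
    have hA : MeasurableSet ((Icc (-t) (1+t))ᶜ) := (measurableSet_Icc).compl
    rw [hPA hP hA]
    have h1 : S1 ⁻¹' (Icc (-t) (1+t))ᶜ ⊆ (Icc (-(2*t)) (1+2*t))ᶜ := by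
      rw [preimage_compl, S1_preim]
      apply compl_subset_compl.mpr
      apply Icc_subset_Icc <;> linarith
    have h2 : S2 ⁻¹' (Icc (-t) (1+t))ᶜ ⊆ (Icc (-(2*t)) (1+2*t))ᶜ := by
      rw [preimage_compl, S2_preim]
      apply compl_subset_compl.mpr
      apply Icc_subset_Icc <;> linarith
    calc 1/4 * P (S1 ⁻¹' (Icc (-t) (1+t))ᶜ) + 3/4 * P (S2 ⁻¹' (Icc (-t) (1+t))ᶜ)
        ≤ 1/4 * P ((Icc (-(2*t)) (1+2*t))ᶜ) + 3/4 * P ((Icc (-(2*t)) (1+2*t))ᶜ) := by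
          gcongr <;> exact measure_mono ‹_›
      _ = P ((Icc (-(2*t)) (1+2*t))ᶜ) := by
          have h4 : (1/4 + 3/4 : ℝ≥0∞) = 1 := by
            rw [ENNReal.div_add_div_same, show (1:ℝ≥0∞)+3 = 4 by norm_num]
            exact ENNReal.div_self (by norm_num) (by norm_num)
          rw [← add_mul, h4, one_mul]
  -- iterate
  have iter : ∀ (t : ℝ), 0 < t → ∀ n : ℕ,
      P ((Icc (-t) (1+t))ᶜ) ≤ P ((Icc (-(2^n*t)) (1+2^n*t))ᶜ) := by
    intro t ht n
    induction n with
    | zero => simp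
    | succ n ih =>
      refine ih.trans ?_
      have := step (2^n*t) (by positivity)
      rw [show (2:ℝ)^(n+1)*t = 2*(2^n*t) by ring]; exact this
  have zero : ∀ t : ℝ, 0 < t → P ((Icc (-t) (1+t))ᶜ) = 0 := by
    intro t ht
    set s : ℕ → Set ℝ := fun n => (Icc (-(2^n*t)) (1+2^n*t))ᶜ with hs
    have hmeas : ∀ n, NullMeasurableSet (s n) P :=
      fun n => (measurableSet_Icc.compl).nullMeasurableSet
    have hanti : Antitone s := by
      intro m n hmn
      apply compl_subset_compl.mpr
      have h2 : (2:ℝ)^m*t ≤ 2^n*t := by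
        have : (2:ℝ)^m ≤ 2^n := pow_le_pow_right₀ (by norm_num) hmn
        nlinarith
      apply Icc_subset_Icc <;> linarith
    have hfin : ∃ n, P (s n) ≠ ⊤ := ⟨0, measure_ne_top _ _⟩
    have hint : ⋂ n, s n = ∅ := by
      ext x
      simp only [mem_iInter, mem_empty_iff_false, iff_false, not_forall]
      obtain ⟨n, hn⟩ := pow_unbounded_of_one_lt ((|x|+1)/t) (by norm_num : (1:ℝ) < 2)
      refine ⟨n, ?_⟩
      simp only [hs, mem_compl_iff, not_not, mem_Icc]
      have h2 : |x| + 1 < 2^n * t := by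
        rw [div_lt_iff₀ ht] at hn; linarith
      have habs : |x| ≤ 2^n*t := by linarith
      have h3 := abs_le.mp habs
      constructor <;> linarith
    have htend := tendsto_measure_iInter_atTop (μ := P) hmeas hanti hfin
    rw [hint, measure_empty] at htend
    have hle : ∀ n, P ((Icc (-t) (1+t))ᶜ) ≤ (P ∘ s) n := fun n => iter t ht n
    exact le_antisymm (ge_of_tendsto htend (Filter.Eventually.of_forall hle)) (zero_le)
  have hsub : (Icc (0:ℝ) 1)ᶜ ⊆ ⋃ n : ℕ, (Icc (-(1/(n+1) : ℝ)) (1+(1/(n+1):ℝ)))ᶜ := by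
    intro x hx
    simp only [mem_compl_iff, mem_Icc, not_and_or, not_le] at hx
    simp only [mem_iUnion, mem_compl_iff, mem_Icc, not_and_or, not_le]
    rcases hx with hx | hx
    · obtain ⟨n, hn⟩ := exists_nat_one_div_lt (show (0:ℝ) < -x by linarith)
      exact ⟨n, Or.inl (by push_cast; push_cast at hn; linarith)⟩
    · obtain ⟨n, hn⟩ := exists_nat_one_div_lt (show (0:ℝ) < x - 1 by linarith)
      exact ⟨n, Or.inr (by push_cast; push_cast at hn; linarith)⟩
  refine measure_mono_null hsub (measure_iUnion_null fun n => zero _ (by positivity))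

lemma h01' (P : Measure ℝ) [IsProbabilityMeasure P] (hP : SelfSimilar P) :
    P ((Icc (0:ℝ) 1)ᶜ) = 0 := h01 hP

variable {P : Measure ℝ} [IsProbabilityMeasure P]
/-- a.e. membership in [0,1] -/
lemma aemem (hP : SelfSimilar P) : ∀ᵐ x ∂P, x ∈ Icc (0:ℝ) 1 := by
  rw [MeasureTheory.ae_iff]
  have h := h01' P hP
  rw [show (Icc (0:ℝ) 1)ᶜ = {a | ¬ a ∈ Icc (0:ℝ) 1} from rfl] at h
  exact h

/-- Integrability of continuous functions bounded on [0,1]. -/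
lemma intCont (hP : SelfSimilar P) {f : ℝ → ℝ} (hf : Continuous f) {C : ℝ}
    (hC : ∀ x ∈ Icc (0:ℝ) 1, |f x| ≤ C) : Integrable f P := by
  refine ⟨hf.aestronglyMeasurable, HasFiniteIntegral.of_bounded (C := C) ?_⟩
  filter_upwards [aemem hP] with x hx
  simpa using hC x hx

lemma intQuadCore (hP : SelfSimilar P) (u v w : ℝ) :
    Integrable (fun x => u*x^2 + v*x + w) P := by
  refine intCont hP (by fun_prop) (C := |u| + |v| + |w|) ?_
  intro x hx
  simp only [mem_Icc] at hx
  have h1 : |u*x^2| ≤ |u| := by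
    rw [abs_mul, abs_of_nonneg (sq_nonneg x)]
    have hx2 : x^2 ≤ 1 := by nlinarith [hx.1, hx.2]
    exact mul_le_of_le_one_right (abs_nonneg u) hx2
  have h2 : |v*x| ≤ |v| := by
    rw [abs_mul]; nlinarith [abs_nonneg v, abs_of_nonneg hx.1, hx.2, abs_nonneg (x:ℝ)]
  calc |u*x^2 + v*x + w| ≤ |u*x^2| + |v*x| + |w| := by
        calc |u*x^2 + v*x + w| ≤ |u*x^2 + v*x| + |w| := abs_add_le _ _
          _ ≤ |u*x^2| + |v*x| + |w| := by linarith [abs_add_le (u*x^2) (v*x)]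
    _ ≤ |u| + |v| + |w| := by linarith

/-- The fundamental set-integral step lemma. -/
lemma stepQCore (hP : SelfSimilar P) (u v w : ℝ) {A : Set ℝ} (hA : MeasurableSet A) :
    ∫ x in A, (u*x^2 + v*x + w) ∂P
      = (1/4) * ∫ x in S1 ⁻¹' A, (u*(S1 x)^2 + v*(S1 x) + w) ∂P
      + (3/4) * ∫ x in S2 ⁻¹' A, (u*(S2 x)^2 + v*(S2 x) + w) ∂P := by
  set f : ℝ → ℝ := fun x => u*x^2 + v*x + w with hf
  have hfc : Continuous f := by fun_prop
  have hint1 : Integrable (f ∘ S1) P := by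
    have : (f ∘ S1) = fun x => (u/16)*x^2 + (v/4)*x + w := by
      ext x; simp [hf, S1]; ring
    rw [this]; exact intQuadCore hP _ _ _
  have hint2 : Integrable (f ∘ S2) P := by
    have : (f ∘ S2) = fun x => (u/4)*x^2 + (u/2 + v/2)*x + (u/4 + v/2 + w) := by
      ext x; simp [hf, S2]; ring
    rw [this]; exact intQuadCore hP _ _ _
  have hm1 : Integrable f (P.map S1) :=
    (integrable_map_measure hfc.aestronglyMeasurable measS1.aemeasurable).mpr hint1
  have hm2 : Integrable f (P.map S2) :=
    (integrable_map_measure hfc.aestronglyMeasurable measS2.aemeasurable).mpr hint2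
  have key : ∫ x in A, f x ∂P
      = (1/4) * ∫ x in A, f x ∂(P.map S1) + (3/4) * ∫ x in A, f x ∂(P.map S2) := by
    conv_lhs => rw [hP]
    rw [Measure.restrict_add, Measure.restrict_smul, Measure.restrict_smul]
    rw [integral_add_measure
      ((hm1.restrict (s := A)).smul_measure (ENNReal.div_lt_top (by norm_num) (by norm_num)).ne)
      ((hm2.restrict (s := A)).smul_measure (ENNReal.div_lt_top (by norm_num) (by norm_num)).ne)]
    rw [integral_smul_measure, integral_smul_measure]
    norm_num
  rw [key]
  congr 1
  · congr 1
    rw [Measure.restrict_map measS1 hA]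
    exact integral_map measS1.aemeasurable hfc.aestronglyMeasurable
  · congr 1
    rw [Measure.restrict_map measS2 hA]
    exact integral_map measS2.aemeasurable hfc.aestronglyMeasurable

lemma intQuad (P : Measure ℝ) [IsProbabilityMeasure P] (hP : SelfSimilar P) (u v w : ℝ) :
    Integrable (fun x => u*x^2 + v*x + w) P := intQuadCore hP u v w
lemma stepQ (P : Measure ℝ) [IsProbabilityMeasure P] (hP : SelfSimilar P) (u v w : ℝ)
    {A : Set ℝ} (hA : MeasurableSet A) :
    ∫ x in A, (u*x^2 + v*x + w) ∂P
      = (1/4) * ∫ x in S1 ⁻¹' A, (u*(S1 x)^2 + v*(S1 x) + w) ∂P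
      + (3/4) * ∫ x in S2 ⁻¹' A, (u*(S2 x)^2 + v*(S2 x) + w) ∂P := stepQCore hP u v w hA
/-- step over Icc with normalized integrands -/
lemma stepIcc (hP : SelfSimilar P) (u v w l r : ℝ) :
    ∫ x in Icc l r, (u*x^2+v*x+w) ∂P
      = (1/4) * ∫ x in Icc (4*l) (4*r), ((u/16)*x^2 + (v/4)*x + w) ∂P
      + (3/4) * ∫ x in Icc (2*l-1) (2*r-1), ((u/4)*x^2 + (u/2+v/2)*x + (u/4+v/2+w)) ∂P := by
  have h := stepQ P hP u v w (measurableSet_Icc : MeasurableSet (Icc l r))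
  rw [S1_preim, S2_preim] at h
  have e1 : (fun x => u*(S1 x)^2 + v*(S1 x) + w) = fun x => (u/16)*x^2 + (v/4)*x + w := by
    funext x; simp only [S1]; ring
  have e2 : (fun x => u*(S2 x)^2 + v*(S2 x) + w)
      = fun x => (u/4)*x^2 + (u/2+v/2)*x + (u/4+v/2+w) := by
    funext x; simp only [S2]; ring
  rw [e1, e2] at h
  exact h

/-- null interval integral -/
lemma nullIcc (hP : SelfSimilar P) {l r : ℝ} (h : r < 0 ∨ 1 < l) (f : ℝ → ℝ) :
    ∫ x in Icc l r, f x ∂P = 0 := by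
  have hnull : P (Icc l r) = 0 := by
    refine measure_mono_null ?_ (h01' P hP)
    intro x hx
    simp only [mem_Icc] at hx
    simp only [mem_compl_iff, mem_Icc, not_and_or, not_le]
    rcases h with h | h
    · exact Or.inl (lt_of_le_of_lt hx.2 h)
    · exact Or.inr (lt_of_lt_of_le h hx.1)
  rw [Measure.restrict_eq_zero.mpr hnull, integral_zero_measure]

/-- full interval integral -/
lemma fullIcc (hP : SelfSimilar P) {l r : ℝ} (hl : l ≤ 0) (hr : 1 ≤ r) {f : ℝ → ℝ}
    (hf : Integrable f P) : ∫ x in Icc l r, f x ∂P = ∫ x, f x ∂P := by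
  have hc : P ((Icc l r)ᶜ) = 0 := by
    refine measure_mono_null ?_ (h01' P hP)
    intro x hx
    simp only [mem_compl_iff, mem_Icc, not_and_or, not_le] at hx ⊢
    rcases hx with h | h
    · exact Or.inl (lt_of_lt_of_le h hl)
    · exact Or.inr (lt_of_le_of_lt hr h)
  have := integral_add_compl (measurableSet_Icc : MeasurableSet (Icc l r)) hf
  rw [Measure.restrict_eq_zero.mpr hc, integral_zero_measure] at this
  linarith [this]

def mm1 (P : Measure ℝ) : ℝ := ∫ x, x ∂P
def mm2 (P : Measure ℝ) : ℝ := ∫ x, x^2 ∂P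

lemma evalQuad (hP : SelfSimilar P) (u v w : ℝ) :
    ∫ x, (u*x^2 + v*x + w) ∂P = u * mm2 P + v * mm1 P + w := by
  have i2 : Integrable (fun x => x^2) P := by
    have := intQuad P hP 1 0 0
    simpa using (by
      have e : (fun x => (1:ℝ)*x^2 + 0*x + 0) = fun x => x^2 := by funext x; ring
      rwa [e] at this)
  have i1 : Integrable (fun x => x) P := by
    have := intQuad P hP 0 1 0
    have e : (fun x => (0:ℝ)*x^2 + 1*x + 0) = fun x => x := by funext x; ring
    rwa [e] at this
  have iuv : Integrable (fun x => u*x^2 + v*x) P := by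
    have h := intQuad P hP u v 0
    have e : (fun x => u*x^2 + v*x + 0) = fun x => u*x^2 + v*x := by funext x; ring
    rwa [e] at h
  rw [integral_add iuv (integrable_const w),
    integral_add (i2.const_mul u) (i1.const_mul v),
    MeasureTheory.integral_const_mul, MeasureTheory.integral_const_mul, integral_const]
  simp only [mm1, mm2, smul_eq_mul, measureReal_def, measure_univ, ENNReal.toReal_one, one_mul]

lemma moments (hP : SelfSimilar P) : mm1 P = 2/3 ∧ mm2 P = 28/51 := by
  have key : ∀ u v w : ℝ, ∫ x, (u*x^2+v*x+w) ∂P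
      = (1/4) * ∫ x, ((u/16)*x^2 + (v/4)*x + w) ∂P
      + (3/4) * ∫ x, ((u/4)*x^2 + (u/2+v/2)*x + (u/4+v/2+w)) ∂P := by
    intro u v w
    have h := stepIcc hP u v w (-2) 2
    rw [fullIcc hP (by norm_num) (by norm_num) (intQuad P hP u v w)] at h
    rw [show (4*(-2):ℝ) = -8 by norm_num, show (4*(2:ℝ)) = 8 by norm_num,
      show (2*(-2:ℝ)-1) = -5 by norm_num, show (2*(2:ℝ)-1) = 3 by norm_num] at h
    rw [fullIcc hP (by norm_num) (by norm_num) (intQuad P hP _ _ _),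
      fullIcc hP (by norm_num) (by norm_num) (intQuad P hP _ _ _)] at h
    exact h
  have eq1 := key 0 1 0
  have eq2 := key 1 0 0
  rw [evalQuad hP, evalQuad hP, evalQuad hP] at eq1
  rw [evalQuad hP, evalQuad hP, evalQuad hP] at eq2
  constructor <;> nlinarith [eq1, eq2]

lemma stepIcc' (P : Measure ℝ) [IsProbabilityMeasure P] (hP : SelfSimilar P) (u v w l r : ℝ) :
    ∫ x in Icc l r, (u*x^2+v*x+w) ∂P
      = (1/4) * ∫ x in Icc (4*l) (4*r), ((u/16)*x^2 + (v/4)*x + w) ∂P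
      + (3/4) * ∫ x in Icc (2*l-1) (2*r-1), ((u/4)*x^2 + (u/2+v/2)*x + (u/4+v/2+w)) ∂P :=
  stepIcc hP u v w l r
lemma nullIcc' (P : Measure ℝ) [IsProbabilityMeasure P] (hP : SelfSimilar P) {l r : ℝ}
    (h : r < 0 ∨ 1 < l) (f : ℝ → ℝ) : ∫ x in Icc l r, f x ∂P = 0 := nullIcc hP h f
lemma fullIcc' (P : Measure ℝ) [IsProbabilityMeasure P] (hP : SelfSimilar P) {l r : ℝ}
    (hl : l ≤ 0) (hr : 1 ≤ r) {f : ℝ → ℝ} (hf : Integrable f P) :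
    ∫ x in Icc l r, f x ∂P = ∫ x, f x ∂P := fullIcc hP hl hr hf
lemma evalQuadM (P : Measure ℝ) [IsProbabilityMeasure P] (hP : SelfSimilar P) (u v w : ℝ) :
    ∫ x, (u*x^2 + v*x + w) ∂P = u * (28/51) + v * (2/3) + w := by
  rw [evalQuad hP, (moments hP).1, (moments hP).2]
section
variable (hP : SelfSimilar P)
include hP

lemma EJ1 (u v w : ℝ) : ∫ x in Icc (0:ℝ) (1/4), (u*x^2+v*x+w) ∂P
    = (1/4)*((u/16)*(28/51) + (v/4)*(2/3) + w) := by
  have h := stepIcc' P hP u v w 0 (1/4)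
  rw [show (4*(0:ℝ)) = 0 by norm_num, show (4*(1/4:ℝ)) = 1 by norm_num,
    show (2*(0:ℝ)-1) = -1 by norm_num, show (2*(1/4:ℝ)-1) = -(1/2) by norm_num] at h
  rw [nullIcc' P hP (l := -1) (r := -(1/2)) (Or.inl (by norm_num)) _,
    fullIcc' P hP (l := 0) (r := 1) (by norm_num) (by norm_num) (intQuad P hP _ _ _), evalQuadM P hP] at h
  rw [h]; ring

lemma EJ2 (u v w : ℝ) : ∫ x in Icc (1/2:ℝ) 1, (u*x^2+v*x+w) ∂P
    = (3/4)*((u/4)*(28/51) + (u/2+v/2)*(2/3) + (u/4+v/2+w)) := by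
  have h := stepIcc' P hP u v w (1/2) 1
  rw [show (4*(1/2:ℝ)) = 2 by norm_num, show (4*(1:ℝ)) = 4 by norm_num,
    show (2*(1/2:ℝ)-1) = 0 by norm_num, show (2*(1:ℝ)-1) = 1 by norm_num] at h
  rw [nullIcc' P hP (l := 2) (r := 4) (Or.inr (by norm_num)) _,
    fullIcc' P hP (l := 0) (r := 1) (by norm_num) (by norm_num) (intQuad P hP _ _ _), evalQuadM P hP] at h
  rw [h]; ring

lemma EJ21 (u v w : ℝ) : ∫ x in Icc (1/2:ℝ) (5/8), (u*x^2+v*x+w) ∂P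
    = (3/4)*(1/4)*(((u/4)/16)*(28/51) + ((u/2+v/2)/4)*(2/3) + (u/4+v/2+w)) := by
  have h := stepIcc' P hP u v w (1/2) (5/8)
  rw [show (4*(1/2:ℝ)) = 2 by norm_num, show (4*(5/8:ℝ)) = 5/2 by norm_num,
    show (2*(1/2:ℝ)-1) = 0 by norm_num, show (2*(5/8:ℝ)-1) = 1/4 by norm_num] at h
  rw [nullIcc' P hP (l := 2) (r := 5/2) (Or.inr (by norm_num)) _, EJ1 hP] at h
  rw [h]; ring

lemma EJ22 (u v w : ℝ) : ∫ x in Icc (3/4:ℝ) 1, (u*x^2+v*x+w) ∂P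
    = (3/4)*((3/4)*(((u/4)/4)*(28/51) + ((u/4)/2+(u/2+v/2)/2)*(2/3)
        + ((u/4)/4+(u/2+v/2)/2+(u/4+v/2+w)))) := by
  have h := stepIcc' P hP u v w (3/4) 1
  rw [show (4*(3/4:ℝ)) = 3 by norm_num, show (4*(1:ℝ)) = 4 by norm_num,
    show (2*(3/4:ℝ)-1) = 1/2 by norm_num, show (2*(1:ℝ)-1) = 1 by norm_num] at h
  rw [nullIcc' P hP (l := 3) (r := 4) (Or.inr (by norm_num)) _, EJ2 hP] at h
  rw [h]; ring

lemma EJ221 (u v w : ℝ) : ∫ x in Icc (3/4:ℝ) (13/16), (u*x^2+v*x+w) ∂P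
    = (3/4)*((3/4)*(1/4)*((((u/4)/4)/16)*(28/51) + (((u/4)/2+(u/2+v/2)/2)/4)*(2/3)
        + ((u/4)/4+(u/2+v/2)/2+(u/4+v/2+w)))) := by
  have h := stepIcc' P hP u v w (3/4) (13/16)
  rw [show (4*(3/4:ℝ)) = 3 by norm_num, show (4*(13/16:ℝ)) = 13/4 by norm_num,
    show (2*(3/4:ℝ)-1) = 1/2 by norm_num, show (2*(13/16:ℝ)-1) = 5/8 by norm_num] at h
  rw [nullIcc' P hP (l := 3) (r := 13/4) (Or.inr (by norm_num)) _, EJ21 hP] at h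
  rw [h]; ring

lemma EJ222 (u v w : ℝ) : ∫ x in Icc (7/8:ℝ) 1, (u*x^2+v*x+w) ∂P
    = (3/4)*((3/4)*((3/4)*((((u/4)/4)/4)*(28/51) + (((u/4)/4)/2+((u/4)/2+(u/2+v/2)/2)/2)*(2/3)
        + (((u/4)/4)/4+((u/4)/2+(u/2+v/2)/2)/2+((u/4)/4+(u/2+v/2)/2+(u/4+v/2+w)))))) := by
  have h := stepIcc' P hP u v w (7/8) 1
  rw [show (4*(7/8:ℝ)) = 7/2 by norm_num, show (4*(1:ℝ)) = 4 by norm_num,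
    show (2*(7/8:ℝ)-1) = 3/4 by norm_num, show (2*(1:ℝ)-1) = 1 by norm_num] at h
  rw [nullIcc' P hP (l := 7/2) (r := 4) (Or.inr (by norm_num)) _, EJ22 hP] at h
  rw [h]; ring

/- now the (x-c)^2 specializations -/
lemma sqIcc (A : Set ℝ) (c : ℝ) :
    (fun x => (x-c)^2) = fun x => 1*x^2 + (-2*c)*x + c^2 := by funext x; ring

lemma E1 (c : ℝ) : ∫ x in Icc (0:ℝ) (1/4), (x-c)^2 ∂P = (1/4)*(c-1/6)^2 + 1/612 := by
  rw [show (fun x => (x-c)^2) = fun x => 1*x^2 + (-2*c)*x + c^2 from by funext x; ring]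
  rw [EJ1 hP]; ring

lemma E2 (c : ℝ) : ∫ x in Icc (1/2:ℝ) 1, (x-c)^2 ∂P = (3/4)*(c-5/6)^2 + 1/51 := by
  rw [show (fun x => (x-c)^2) = fun x => 1*x^2 + (-2*c)*x + c^2 from by funext x; ring]
  rw [EJ2 hP]; ring

lemma E21 (c : ℝ) : ∫ x in Icc (1/2:ℝ) (5/8), (x-c)^2 ∂P = (3/16)*(c-7/12)^2 + 1/3264 := by
  rw [show (fun x => (x-c)^2) = fun x => 1*x^2 + (-2*c)*x + c^2 from by funext x; ring]
  rw [EJ21 hP]; ring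

lemma E22 (c : ℝ) : ∫ x in Icc (3/4:ℝ) 1, (x-c)^2 ∂P = (9/16)*(c-11/12)^2 + 1/272 := by
  rw [show (fun x => (x-c)^2) = fun x => 1*x^2 + (-2*c)*x + c^2 from by funext x; ring]
  rw [EJ22 hP]; ring

lemma E221 (c : ℝ) : ∫ x in Icc (3/4:ℝ) (13/16), (x-c)^2 ∂P
    = (9/64)*(c-19/24)^2 + 1/17408 := by
  rw [show (fun x => (x-c)^2) = fun x => 1*x^2 + (-2*c)*x + c^2 from by funext x; ring]
  rw [EJ221 hP]; ring

lemma E222 (c : ℝ) : ∫ x in Icc (7/8:ℝ) 1, (x-c)^2 ∂P = (27/64)*(c-23/24)^2 + 3/4352 := by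
  rw [show (fun x => (x-c)^2) = fun x => 1*x^2 + (-2*c)*x + c^2 from by funext x; ring]
  rw [EJ222 hP]; ring

/- masses -/
lemma mass1 : (P (Icc (0:ℝ) (1/4))).toReal = 1/4 := by
  have h := EJ1 hP 0 0 1
  rw [show (fun x:ℝ => (0:ℝ)*x^2 + 0*x + 1) = fun _ => (1:ℝ) from by funext x; ring] at h
  rw [setIntegral_const] at h
  have := h
  simp only [smul_eq_mul, mul_one] at this
  rw [← measureReal_def, this]; norm_num

lemma mass221 : (P (Icc (3/4:ℝ) (13/16))).toReal = 9/64 := by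
  have h := EJ221 hP 0 0 1
  rw [show (fun x:ℝ => (0:ℝ)*x^2 + 0*x + 1) = fun _ => (1:ℝ) from by funext x; ring] at h
  rw [setIntegral_const] at h
  have := h
  simp only [smul_eq_mul, mul_one] at this
  rw [← measureReal_def, this]; norm_num
end

lemma EJ1' (P : Measure ℝ) [IsProbabilityMeasure P] (hP : SelfSimilar P) (u v w : ℝ) :
    ∫ x in Icc (0:ℝ) (1/4), (u*x^2+v*x+w) ∂P = (1/4)*((u/16)*(28/51) + (v/4)*(2/3) + w) :=
  EJ1 hP u v w
lemma E1' (P : Measure ℝ) [IsProbabilityMeasure P] (hP : SelfSimilar P) (c : ℝ) :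
    ∫ x in Icc (0:ℝ) (1/4), (x-c)^2 ∂P = (1/4)*(c-1/6)^2 + 1/612 := E1 hP c
lemma E2' (P : Measure ℝ) [IsProbabilityMeasure P] (hP : SelfSimilar P) (c : ℝ) :
    ∫ x in Icc (1/2:ℝ) 1, (x-c)^2 ∂P = (3/4)*(c-5/6)^2 + 1/51 := E2 hP c
lemma E21' (P : Measure ℝ) [IsProbabilityMeasure P] (hP : SelfSimilar P) (c : ℝ) :
    ∫ x in Icc (1/2:ℝ) (5/8), (x-c)^2 ∂P = (3/16)*(c-7/12)^2 + 1/3264 := E21 hP c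
lemma E22' (P : Measure ℝ) [IsProbabilityMeasure P] (hP : SelfSimilar P) (c : ℝ) :
    ∫ x in Icc (3/4:ℝ) 1, (x-c)^2 ∂P = (9/16)*(c-11/12)^2 + 1/272 := E22 hP c
lemma E221' (P : Measure ℝ) [IsProbabilityMeasure P] (hP : SelfSimilar P) (c : ℝ) :
    ∫ x in Icc (3/4:ℝ) (13/16), (x-c)^2 ∂P = (9/64)*(c-19/24)^2 + 1/17408 := E221 hP c
lemma E222' (P : Measure ℝ) [IsProbabilityMeasure P] (hP : SelfSimilar P) (c : ℝ) :
    ∫ x in Icc (7/8:ℝ) 1, (x-c)^2 ∂P = (27/64)*(c-23/24)^2 + 3/4352 := E222 hP c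
lemma mass1' (P : Measure ℝ) [IsProbabilityMeasure P] (hP : SelfSimilar P) :
    (P (Icc (0:ℝ) (1/4))).toReal = 1/4 := mass1 hP
lemma mass221' (P : Measure ℝ) [IsProbabilityMeasure P] (hP : SelfSimilar P) :
    (P (Icc (3/4:ℝ) (13/16))).toReal = 9/64 := mass221 hP
def kk (P : Measure ℝ) (t : ℝ) : ℝ := ∫ x in Icc (0:ℝ) t, (t - x) ∂P

section
variable (hP : SelfSimilar P)
include hP

lemma gapNull : P (Ioo (1/4:ℝ) (1/2)) = 0 := by
  have hA : MeasurableSet (Ioo (1/4:ℝ) (1/2)) := measurableSet_Ioo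
  have h : P (Ioo (1/4:ℝ) (1/2))
      = 1/4 * P (S1 ⁻¹' Ioo (1/4:ℝ) (1/2)) + 3/4 * P (S2 ⁻¹' Ioo (1/4:ℝ) (1/2)) := by
    conv_lhs => rw [hP]
    rw [Measure.add_apply, Measure.smul_apply, Measure.smul_apply,
      Measure.map_apply (by unfold S1; fun_prop) hA, Measure.map_apply (by unfold S2; fun_prop) hA,
      smul_eq_mul, smul_eq_mul]
  have h1 : P (S1 ⁻¹' Ioo (1/4:ℝ) (1/2)) = 0 := by
    refine measure_mono_null ?_ (h01' P hP)
    intro x hx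
    simp only [mem_preimage, S1, mem_Ioo] at hx
    simp only [mem_compl_iff, mem_Icc, not_and_or, not_le]
    right; linarith [hx.1]
  have h2 : P (S2 ⁻¹' Ioo (1/4:ℝ) (1/2)) = 0 := by
    refine measure_mono_null ?_ (h01' P hP)
    intro x hx
    simp only [mem_preimage, S2, mem_Ioo] at hx
    simp only [mem_compl_iff, mem_Icc, not_and_or, not_le]
    left; linarith [hx.2]
  rw [h, h1, h2]; simp

lemma aeIccExt {r : ℝ} (hr : 0 ≤ r) : (Icc (-1:ℝ) r : Set ℝ) =ᵐ[P] (Icc (0:ℝ) r : Set ℝ) := by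
  have : P (Ico (-1:ℝ) 0) = 0 := by
    refine measure_mono_null ?_ (h01' P hP)
    intro x hx
    simp only [mem_Ico] at hx
    simp only [mem_compl_iff, mem_Icc, not_and_or, not_le]
    exact Or.inl hx.2
  refine (MeasureTheory.measure_symmDiff_eq_zero_iff).mp ?_
  refine measure_mono_null ?_ this
  intro x hx
  rcases hx with hx | hx
  · simp only [mem_diff, mem_Icc] at hx
    exact ⟨hx.1.1, by by_contra hc; push_neg at hc; exact hx.2 ⟨by linarith, hx.1.2⟩⟩
  · simp only [mem_diff, mem_Icc] at hx
    exact absurd ⟨by linarith [hx.1.1], hx.1.2⟩ hx.2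

omit hP in
lemma kknonneg (t : ℝ) : 0 ≤ kk P t := by
  refine setIntegral_nonneg measurableSet_Icc fun x hx => ?_
  simp only [mem_Icc] at hx; linarith [hx.2]

lemma kkle (t : ℝ) (ht : 0 ≤ t) : kk P t ≤ t := by
  unfold kk
  have hint : IntegrableOn (fun x => t - x) (Icc 0 t) P := by
    have := intQuad P hP 0 (-1) t
    have e : (fun x => (0:ℝ)*x^2 + (-1)*x + t) = fun x => t - x := by funext x; ring
    rw [e] at this
    exact this.integrableOn
  calc ∫ x in Icc (0:ℝ) t, (t - x) ∂P ≤ ∫ _ in Icc (0:ℝ) t, t ∂P := by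
        refine setIntegral_mono_on hint (integrableOn_const (measure_ne_top _ _))
          measurableSet_Icc fun x hx => ?_
        simp only [mem_Icc] at hx; linarith [hx.1]
    _ = (P (Icc (0:ℝ) t)).toReal * t := by rw [setIntegral_const]; simp [measureReal_def]
    _ ≤ 1 * t := by
        refine mul_le_mul_of_nonneg_right ?_ ht
        have h1 : P (Icc (0:ℝ) t) ≤ 1 := prob_le_one
        have := ENNReal.toReal_mono ENNReal.one_ne_top h1
        simpa using this
    _ = t := one_mul t

lemma kkrec1 {t : ℝ} (h0 : 0 ≤ t) (h1 : t ≤ 1/4) : kk P t = (1/16) * kk P (4*t) := by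
  have e : (fun x:ℝ => t - x) = fun x => 0*x^2 + (-1)*x + t := by funext x; ring
  have h := stepIcc' P hP 0 (-1) t 0 t
  rw [show (4*(0:ℝ)) = 0 by norm_num, show (2*(0:ℝ)-1) = -1 by norm_num] at h
  rw [nullIcc' P hP (l := -1) (r := 2*t-1) (Or.inl (by linarith)) _] at h
  have e2 : (fun x:ℝ => (0:ℝ)/16*x^2 + (-1)/4*x + t) = fun x => (1/4)*(0*x^2 + (-1)*x + 4*t) := by
    funext x; ring
  rw [e2, MeasureTheory.integral_const_mul] at h
  have e3 : (fun x:ℝ => 4*t - x) = fun x => 0*x^2 + (-1)*x + 4*t := by funext x; ring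
  show (∫ x in Icc (0:ℝ) t, (t - x) ∂P) = (1/16) * ∫ x in Icc (0:ℝ) (4*t), (4*t - x) ∂P
  rw [e, e3, h]
  ring

lemma kkrec2 {t : ℝ} (h0 : 1/4 ≤ t) (h1 : t < 1/2) : kk P t = t/4 - 1/24 := by
  unfold kk
  have hae : (Icc (0:ℝ) t : Set ℝ) =ᵐ[P] (Icc (0:ℝ) (1/4) : Set ℝ) := by
    refine (MeasureTheory.measure_symmDiff_eq_zero_iff).mp ?_
    refine measure_mono_null ?_ (gapNull hP)
    intro x hx
    rcases hx with hx | hx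
    · simp only [mem_diff, mem_Icc] at hx
      refine ⟨?_, lt_of_le_of_lt hx.1.2 h1⟩
      by_contra hc; push_neg at hc
      exact hx.2 ⟨hx.1.1, by linarith⟩
    · simp only [mem_diff, mem_Icc] at hx
      exact absurd ⟨hx.1.1, le_trans hx.1.2 (by linarith)⟩ hx.2
  rw [MeasureTheory.setIntegral_congr_set hae]
  have e : (fun x:ℝ => t - x) = fun x => 0*x^2 + (-1)*x + t := by funext x; ring
  rw [e, EJ1' P hP]
  ring

lemma kkrec3 {t : ℝ} (h0 : 1/2 ≤ t) (h1 : t ≤ 1) :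
    kk P t = t/4 - 1/24 + (3/8) * kk P (2*t-1) := by
  have e : (fun x:ℝ => t - x) = fun x => 0*x^2 + (-1)*x + t := by funext x; ring
  have h := stepIcc' P hP 0 (-1) t 0 t
  rw [show (4*(0:ℝ)) = 0 by norm_num, show (2*(0:ℝ)-1) = -1 by norm_num] at h
  rw [fullIcc' P hP (l := 0) (r := 4*t) (by norm_num) (by linarith) (intQuad P hP _ _ _),
    evalQuadM P hP] at h
  rw [MeasureTheory.setIntegral_congr_set (aeIccExt hP (by linarith : (0:ℝ) ≤ 2*t-1))] at h
  have e2 : (fun x:ℝ => (0:ℝ)/4*x^2 + (0/2 + (-1)/2)*x + (0/4 + (-1)/2 + t))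
      = fun x => (1/2)*(0*x^2 + (-1)*x + (2*t-1)) := by funext x; ring
  rw [e2, MeasureTheory.integral_const_mul] at h
  have e3 : (fun x:ℝ => 2*t-1 - x) = fun x => 0*x^2 + (-1)*x + (2*t-1) := by funext x; ring
  show (∫ x in Icc (0:ℝ) t, (t - x) ∂P)
      = t/4 - 1/24 + (3/8) * ∫ x in Icc (0:ℝ) (2*t-1), (2*t-1 - x) ∂P
  rw [e, e3, h]
  ring

/-- main bound on kk -/
lemma kkbound : ∀ t : ℝ, 0 ≤ t → t ≤ 1 → kk P t ≤ (3/8)*t^2 := by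
  -- iterated improvement
  have scaleInd : ∀ (c : ℝ), (3/8 ≤ c) →
      (∀ t, 1/2 ≤ t → t ≤ 1 → kk P t ≤ c*t^2) →
      (∀ t, 1/4 ≤ t → t < 1/2 → kk P t ≤ c*t^2) →
      ∀ t, 0 < t → t ≤ 1 → kk P t ≤ c*t^2 := by
    intro c hc h3 h2
    have key : ∀ n : ℕ, ∀ t : ℝ, 0 < t → t ≤ 1 → 1/4^n ≤ t → kk P t ≤ c*t^2 := by
      intro n
      induction n with
      | zero =>
        intro t h0 h1 hn
        simp only [pow_zero] at hn
        exact h3 t (by linarith) h1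
      | succ n ih =>
        intro t h0 h1 hn
        rcases le_or_gt (1/2 : ℝ) t with hge | hlt
        · exact h3 t hge h1
        rcases le_or_gt (1/4 : ℝ) t with hge2 | hlt2
        · exact h2 t hge2 hlt
        · have h4t : kk P t = (1/16) * kk P (4*t) := kkrec1 hP (le_of_lt h0) (le_of_lt hlt2)
          have hb : kk P (4*t) ≤ c*(4*t)^2 := by
            refine ih (4*t) (by linarith) (by linarith) ?_
            have : (1:ℝ)/4^(n+1) ≤ t := hn
            have h4 : (1:ℝ)/4^n ≤ 4*t := by
              rw [pow_succ] at this
              have : (1:ℝ)/(4^n*4) ≤ t := this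
              calc (1:ℝ)/4^n = 4*(1/(4^n*4)) := by field_simp
                _ ≤ 4*t := by linarith
            exact h4
          calc kk P t = (1/16) * kk P (4*t) := h4t
            _ ≤ (1/16) * (c*(4*t)^2) := by
                refine mul_le_mul_of_nonneg_left hb (by norm_num)
            _ = c*t^2 := by ring
    intro t h0 h1
    obtain ⟨n, hn⟩ := pow_unbounded_of_one_lt (1/t) (by norm_num : (1:ℝ) < 4)
    refine key n t h0 h1 ?_
    rw [div_lt_iff₀ h0] at hn
    rw [div_le_iff₀ (by positivity)]
    nlinarith
  -- one improvement step
  have improve : ∀ d : ℝ, 0 ≤ d →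
      (∀ t, 0 ≤ t → t ≤ 1 → kk P t ≤ (3/8 + d)*t^2) →
      (∀ t, 0 ≤ t → t ≤ 1 → kk P t ≤ (3/8 + (3/8)*d)*t^2) := by
    intro d hd hold
    have h2 : ∀ t, 1/4 ≤ t → t < (1/2:ℝ) → kk P t ≤ (3/8 + (3/8)*d)*t^2 := by
      intro t ht1 ht2
      rw [kkrec2 hP ht1 ht2]
      nlinarith [sq_nonneg (t - 1/3), sq_nonneg t]
    have h3 : ∀ t, 1/2 ≤ t → t ≤ (1:ℝ) → kk P t ≤ (3/8 + (3/8)*d)*t^2 := by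
      intro t ht1 ht2
      rw [kkrec3 hP ht1 ht2]
      have hb := hold (2*t-1) (by linarith) (by linarith)
      have hsq : (2*t-1)^2 ≤ t^2 := by nlinarith
      nlinarith [sq_nonneg (t - 1/2), sq_nonneg (1 - t), mul_nonneg hd (sq_nonneg (2*t-1))]
    intro t ht0 ht1
    rcases eq_or_lt_of_le ht0 with rfl | hpos
    · have := kkle hP 0 le_rfl
      nlinarith
    · exact scaleInd (3/8 + (3/8)*d) (by linarith) h3 h2 t hpos ht1
  -- base
  have base : ∀ t, 0 ≤ t → t ≤ 1 → kk P t ≤ (3/8 + 16)*t^2 := by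
    have h2 : ∀ t, 1/4 ≤ t → t < (1/2:ℝ) → kk P t ≤ (3/8 + 16)*t^2 := by
      intro t ht1 ht2
      have := kkle hP t (by linarith)
      nlinarith
    have h3 : ∀ t, 1/2 ≤ t → t ≤ (1:ℝ) → kk P t ≤ (3/8 + 16)*t^2 := by
      intro t ht1 ht2
      have := kkle hP t (by linarith)
      nlinarith
    intro t ht0 ht1
    rcases eq_or_lt_of_le ht0 with rfl | hpos
    · have := kkle hP 0 le_rfl
      nlinarith
    · exact scaleInd (3/8+16) (by norm_num) h3 h2 t hpos ht1
  -- iterate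
  have iter : ∀ j : ℕ, ∀ t, 0 ≤ t → t ≤ 1 → kk P t ≤ (3/8 + (3/8)^j * 16)*t^2 := by
    intro j
    induction j with
    | zero => simpa using base
    | succ j ih =>
      have := improve ((3/8)^j * 16) (by positivity) ih
      intro t h0 h1
      have h2 := this t h0 h1
      calc kk P t ≤ (3/8 + (3/8)*((3/8)^j*16))*t^2 := h2
        _ = (3/8 + (3/8)^(j+1)*16)*t^2 := by ring
  intro t h0 h1
  by_contra hcon
  push_neg at hcon
  set ε := kk P t - (3/8)*t^2 with hε
  have hεpos : 0 < ε := by simp only [hε]; linarith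
  obtain ⟨j, hj⟩ := exists_pow_lt_of_lt_one (show (0:ℝ) < ε/16 by positivity)
    (by norm_num : (3:ℝ)/8 < 1)
  have := iter j t h0 h1
  have ht2 : t^2 ≤ 1 := by nlinarith
  have : kk P t ≤ (3/8)*t^2 + (3/8)^j*16 := by nlinarith [pow_nonneg (show (0:ℝ) ≤ 3/8 by norm_num) j]
  have : (3:ℝ)/8 ≤ 0 ∨ True := Or.inr trivial
  nlinarith [hj, hεpos]
end

lemma gapNull' (P : Measure ℝ) [IsProbabilityMeasure P] (hP : SelfSimilar P) :
    P (Ioo (1/4:ℝ) (1/2)) = 0 := gapNull hP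
lemma kknonneg' (P : Measure ℝ) [IsProbabilityMeasure P] (t : ℝ) : 0 ≤ kk P t := kknonneg t
lemma kkbound' (P : Measure ℝ) [IsProbabilityMeasure P] (hP : SelfSimilar P) :
    ∀ t : ℝ, 0 ≤ t → t ≤ 1 → kk P t ≤ (3/8)*t^2 := kkbound hP
section
variable (hP : SelfSimilar P)
include hP

lemma intSq (c : ℝ) : Integrable (fun x => (x-c)^2) P := by
  have h := intQuad P hP 1 (-2*c) (c^2)
  have e : (fun x => (1:ℝ)*x^2 + (-2*c)*x + c^2) = fun x => (x-c)^2 := by funext x; ring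
  rwa [e] at h

lemma intMin (a b : ℝ) : Integrable (fun x => min ((x-a)^2) ((x-b)^2)) P := by
  refine (intSq hP a).mono ?_ ?_
  · exact (Continuous.min (by fun_prop) (by fun_prop)).aestronglyMeasurable
  · refine Filter.Eventually.of_forall fun x => ?_
    have h1 : (0:ℝ) ≤ min ((x-a)^2) ((x-b)^2) := le_min (sq_nonneg _) (sq_nonneg _)
    have h2 : min ((x-a)^2) ((x-b)^2) ≤ (x-a)^2 := min_le_left _ _
    rw [Real.norm_eq_abs, Real.norm_eq_abs, abs_of_nonneg h1, abs_of_nonneg (sq_nonneg _)]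
    exact h2

omit hP in
lemma minnn (a b : ℝ) : 0 ≤ᵐ[P] fun x => min ((x-a)^2) ((x-b)^2) :=
  Filter.Eventually.of_forall fun x => le_min (sq_nonneg _) (sq_nonneg _)

/-- sum of two disjoint set integrals bounded by total -/
lemma sum2le {f : ℝ → ℝ} (hf : Integrable f P) (hnn : 0 ≤ᵐ[P] f)
    {A B : Set ℝ} (hA : MeasurableSet A) (hB : MeasurableSet B) (hd : Disjoint A B) :
    ∫ x in A, f x ∂P + ∫ x in B, f x ∂P ≤ ∫ x, f x ∂P := by
  rw [← setIntegral_union hd hB hf.integrableOn hf.integrableOn]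
  exact setIntegral_le_integral hf hnn

lemma sum3le {f : ℝ → ℝ} (hf : Integrable f P) (hnn : 0 ≤ᵐ[P] f)
    {A B C : Set ℝ} (hA : MeasurableSet A) (hB : MeasurableSet B) (hC : MeasurableSet C)
    (hAB : Disjoint A B) (hAC : Disjoint A C) (hBC : Disjoint B C) :
    ∫ x in A, f x ∂P + ∫ x in B, f x ∂P + ∫ x in C, f x ∂P ≤ ∫ x, f x ∂P := by
  rw [← setIntegral_union hAB hB hf.integrableOn hf.integrableOn,
    ← setIntegral_union (disjoint_union_left.mpr ⟨hAC, hBC⟩) hC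
      hf.integrableOn hf.integrableOn]
  exact setIntegral_le_integral hf hnn

lemma sum4le {f : ℝ → ℝ} (hf : Integrable f P) (hnn : 0 ≤ᵐ[P] f)
    {A B C D : Set ℝ} (hA : MeasurableSet A) (hB : MeasurableSet B) (hC : MeasurableSet C)
    (hD : MeasurableSet D) (hAB : Disjoint A B) (hAC : Disjoint A C) (hBC : Disjoint B C)
    (hAD : Disjoint A D) (hBD : Disjoint B D) (hCD : Disjoint C D) :
    ∫ x in A, f x ∂P + ∫ x in B, f x ∂P + ∫ x in C, f x ∂P + ∫ x in D, f x ∂P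
      ≤ ∫ x, f x ∂P := by
  rw [← setIntegral_union hAB hB hf.integrableOn hf.integrableOn,
    ← setIntegral_union (disjoint_union_left.mpr ⟨hAC, hBC⟩) hC
      hf.integrableOn hf.integrableOn,
    ← setIntegral_union (disjoint_union_left.mpr ⟨disjoint_union_left.mpr ⟨hAD, hBD⟩, hCD⟩) hD
      hf.integrableOn hf.integrableOn]
  exact setIntegral_le_integral hf hnn

lemma IccDisj {a b c d : ℝ} (h : b < c) : Disjoint (Icc a b) (Icc c d) := by
  rw [Set.disjoint_left]
  intro x h1 h2
  simp only [mem_Icc] at h1 h2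
  linarith [h1.2, h2.1]

lemma intDiff (a b : ℝ) : Integrable (fun x => (x-a)^2 - (x-b)^2) P := by
  have h := intQuad P hP 0 (2*b-2*a) (a^2-b^2)
  have e : (fun x => (0:ℝ)*x^2 + (2*b-2*a)*x + (a^2-b^2))
      = fun x => (x-a)^2 - (x-b)^2 := by funext x; ring
  rwa [e] at h

lemma bndPt {A : Set ℝ} (hA : MeasurableSet A) (a b c : ℝ)
    (h : ∀ x ∈ A, (x-c)^2 ≤ min ((x-a)^2) ((x-b)^2)) :
    ∫ x in A, (x-c)^2 ∂P ≤ ∫ x in A, min ((x-a)^2) ((x-b)^2) ∂P :=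
  setIntegral_mono_on (intSq hP c).integrableOn (intMin hP a b).integrableOn hA h

/-- the identity used in cut lemmas -/
lemma EL3 (a b : ℝ) (h1 : 1 ≤ a+b) (h2 : a+b ≤ 5/4) :
    ∫ x in Icc (1/2:ℝ) ((a+b)/2), ((x-a)^2 - (x-b)^2) ∂P
      = -((b-a) * kk P (a+b-1)) * (3/4) := by
  have e : (fun x:ℝ => (x-a)^2 - (x-b)^2)
      = fun x => 0*x^2 + (2*b-2*a)*x + (a^2-b^2) := by funext x; ring
  rw [e]
  have h := stepIcc' P hP 0 (2*b-2*a) (a^2-b^2) (1/2) ((a+b)/2)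
  rw [show (4*(1/2:ℝ)) = 2 by norm_num] at h
  rw [nullIcc' P hP (l := 2) (r := 4*((a+b)/2)) (Or.inr (by norm_num)) _] at h
  rw [show (2*(1/2:ℝ)-1) = 0 by norm_num, show (2*((a+b)/2)-1 : ℝ) = a+b-1 by ring] at h
  have e2 : (fun x:ℝ => (0:ℝ)/4*x^2 + (0/2 + (2*b-2*a)/2)*x + (0/4 + (2*b-2*a)/2 + (a^2-b^2)))
      = fun x => (-(b-a))*((a+b-1) - x) := by funext x; ring
  rw [e2, MeasureTheory.integral_const_mul] at h
  rw [h]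
  have : (∫ x in Icc (0:ℝ) (a+b-1), ((a+b-1) - x) ∂P) = kk P (a+b-1) := rfl
  rw [this]
  ring

omit hP in
lemma IccIocDisj {a b c : ℝ} : Disjoint (Icc a b) (Ioc b c) := by
  rw [Set.disjoint_left]
  intro x h1 h2
  simp only [mem_Icc, mem_Ioc] at h1 h2
  linarith [h1.2, h2.1]

/-- cut lemma for J21, case 1 < s ≤ 5/4 -/
lemma cutJ21 (a b : ℝ) (hab : a ≤ b) (h1 : 1 ≤ a+b) (h2 : a+b ≤ 5/4) :
    (3/16)*(b-7/12)^2 + 1/3264 - (9/32)*(b-a)*(a+b-1)^2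
      ≤ ∫ x in Icc (1/2:ℝ) (5/8), min ((x-a)^2) ((x-b)^2) ∂P := by
  set m := (a+b)/2 with hm
  have hm1 : 1/2 ≤ m := by rw [hm]; linarith
  have hm2 : m ≤ 5/8 := by rw [hm]; linarith
  have hsplit : Icc (1/2:ℝ) (5/8) = Icc (1/2) m ∪ Ioc m (5/8) :=
    (Icc_union_Ioc_eq_Icc hm1 hm2).symm
  have hImin := intMin hP a b
  have hIb := intSq hP b
  have hIa := intSq hP a
  have hsum : ∫ x in Icc (1/2:ℝ) (5/8), min ((x-a)^2) ((x-b)^2) ∂P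
      = ∫ x in Icc (1/2) m, min ((x-a)^2) ((x-b)^2) ∂P
      + ∫ x in Ioc m (5/8), min ((x-a)^2) ((x-b)^2) ∂P := by
    rw [hsplit]
    exact setIntegral_union IccIocDisj measurableSet_Ioc hImin.integrableOn hImin.integrableOn
  have hL : ∫ x in Icc (1/2) m, ((x-a)^2 : ℝ) ∂P
      ≤ ∫ x in Icc (1/2) m, min ((x-a)^2) ((x-b)^2) ∂P := by
    refine setIntegral_mono_on hIa.integrableOn hImin.integrableOn measurableSet_Icc ?_
    intro x hx
    simp only [mem_Icc] at hx
    refine le_min le_rfl ?_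
    nlinarith [hx.2]
  have hR : ∫ x in Ioc m (5/8), ((x-b)^2 : ℝ) ∂P
      ≤ ∫ x in Ioc m (5/8), min ((x-a)^2) ((x-b)^2) ∂P := by
    refine setIntegral_mono_on hIb.integrableOn hImin.integrableOn measurableSet_Ioc ?_
    intro x hx
    simp only [mem_Ioc] at hx
    refine le_min ?_ le_rfl
    nlinarith [hx.1]
  have hLsplit : ∫ x in Icc (1/2) m, ((x-a)^2 : ℝ) ∂P
      = ∫ x in Icc (1/2) m, ((x-b)^2 : ℝ) ∂P
      + ∫ x in Icc (1/2) m, ((x-a)^2 - (x-b)^2 : ℝ) ∂P := by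
    rw [← integral_add hIb.integrableOn (intDiff hP a b).integrableOn]
    congr 1
    funext x
    ring
  have hEb : ∫ x in Icc (1/2) m, ((x-b)^2 : ℝ) ∂P + ∫ x in Ioc m (5/8), ((x-b)^2 : ℝ) ∂P
      = (3/16)*(b-7/12)^2 + 1/3264 := by
    rw [← setIntegral_union IccIocDisj measurableSet_Ioc hIb.integrableOn hIb.integrableOn,
      ← hsplit]
    exact E21' P hP b
  have hEL := EL3 hP a b h1 h2
  rw [show ((a+b)/2 : ℝ) = m from rfl] at hEL
  have hkkb := kkbound' P hP (a+b-1) (by linarith) (by linarith)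
  have hkknn := kknonneg' P (a+b-1)
  have hba : (0:ℝ) ≤ b - a := by linarith
  calc (3/16)*(b-7/12)^2 + 1/3264 - (9/32)*(b-a)*(a+b-1)^2
      ≤ (3/16)*(b-7/12)^2 + 1/3264 - ((b-a) * kk P (a+b-1)) * (3/4) := by
        nlinarith [mul_nonneg hba (sub_nonneg.mpr hkkb), mul_nonneg hba hkknn]
    _ = (∫ x in Icc (1/2) m, ((x-b)^2 : ℝ) ∂P + ∫ x in Ioc m (5/8), ((x-b)^2 : ℝ) ∂P)
        + ∫ x in Icc (1/2) m, ((x-a)^2 - (x-b)^2 : ℝ) ∂P := by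
        rw [hEb, hEL]; ring
    _ = ∫ x in Icc (1/2) m, ((x-a)^2 : ℝ) ∂P + ∫ x in Ioc m (5/8), ((x-b)^2 : ℝ) ∂P := by
        rw [hLsplit]; ring
    _ ≤ ∫ x in Icc (1/2) m, min ((x-a)^2) ((x-b)^2) ∂P
        + ∫ x in Ioc m (5/8), min ((x-a)^2) ((x-b)^2) ∂P := by
        exact add_le_add hL hR
    _ = ∫ x in Icc (1/2:ℝ) (5/8), min ((x-a)^2) ((x-b)^2) ∂P := hsum.symm

/-- cut lemma for J221, case 3/2 < s ≤ 13/8 -/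
lemma cutJ221 (a b : ℝ) (hab : a ≤ b) (h1 : 3/2 ≤ a+b) (h2 : a+b ≤ 13/8) :
    (9/64)*(b-19/24)^2 + 1/17408 + (9/64)*((b-a)*(3/2-(a+b)))
      ≤ ∫ x in Icc (3/4:ℝ) (13/16), min ((x-a)^2) ((x-b)^2) ∂P := by
  set m := (a+b)/2 with hm
  have hm1 : 3/4 ≤ m := by rw [hm]; linarith
  have hm2 : m ≤ 13/16 := by rw [hm]; linarith
  have hsplit : Icc (3/4:ℝ) (13/16) = Icc (3/4) m ∪ Ioc m (13/16) :=
    (Icc_union_Ioc_eq_Icc hm1 hm2).symm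
  have hImin := intMin hP a b
  have hIb := intSq hP b
  have hIa := intSq hP a
  have hsum : ∫ x in Icc (3/4:ℝ) (13/16), min ((x-a)^2) ((x-b)^2) ∂P
      = ∫ x in Icc (3/4) m, min ((x-a)^2) ((x-b)^2) ∂P
      + ∫ x in Ioc m (13/16), min ((x-a)^2) ((x-b)^2) ∂P := by
    rw [hsplit]
    exact setIntegral_union IccIocDisj measurableSet_Ioc hImin.integrableOn hImin.integrableOn
  have hL : ∫ x in Icc (3/4) m, ((x-a)^2 : ℝ) ∂P
      ≤ ∫ x in Icc (3/4) m, min ((x-a)^2) ((x-b)^2) ∂P := by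
    refine setIntegral_mono_on hIa.integrableOn hImin.integrableOn measurableSet_Icc ?_
    intro x hx
    simp only [mem_Icc] at hx
    refine le_min le_rfl ?_
    nlinarith [hx.2]
  have hR : ∫ x in Ioc m (13/16), ((x-b)^2 : ℝ) ∂P
      ≤ ∫ x in Ioc m (13/16), min ((x-a)^2) ((x-b)^2) ∂P := by
    refine setIntegral_mono_on hIb.integrableOn hImin.integrableOn measurableSet_Ioc ?_
    intro x hx
    simp only [mem_Ioc] at hx
    refine le_min ?_ le_rfl
    nlinarith [hx.1]
  have hLsplit : ∫ x in Icc (3/4) m, ((x-a)^2 : ℝ) ∂P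
      = ∫ x in Icc (3/4) m, ((x-b)^2 : ℝ) ∂P
      + ∫ x in Icc (3/4) m, ((x-a)^2 - (x-b)^2 : ℝ) ∂P := by
    rw [← integral_add hIb.integrableOn (intDiff hP a b).integrableOn]
    congr 1
    funext x
    ring
  have hconst : (P (Icc (3/4:ℝ) m)).toReal * ((b-a)*(3/2-(a+b)))
      ≤ ∫ x in Icc (3/4) m, ((x-a)^2 - (x-b)^2 : ℝ) ∂P := by
    have hc : ∫ x in Icc (3/4:ℝ) m, ((b-a)*(3/2-(a+b))) ∂P
        = (P (Icc (3/4:ℝ) m)).toReal * ((b-a)*(3/2-(a+b))) := by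
      rw [setIntegral_const]; simp [measureReal_def]
    rw [← hc]
    refine setIntegral_mono_on (integrableOn_const (measure_ne_top _ _))
      (intDiff hP a b).integrableOn measurableSet_Icc ?_
    intro x hx
    simp only [mem_Icc] at hx
    nlinarith [hx.1]
  have hmass : (P (Icc (3/4:ℝ) m)).toReal ≤ 9/64 := by
    rw [← mass221' P hP]
    refine ENNReal.toReal_mono (measure_ne_top _ _) (measure_mono (Icc_subset_Icc le_rfl hm2))
  have hneg : (b-a)*(3/2-(a+b)) ≤ 0 := by nlinarith
  have hmle : (9/64) * ((b-a)*(3/2-(a+b))) ≤ (P (Icc (3/4:ℝ) m)).toReal * ((b-a)*(3/2-(a+b))) :=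
    mul_le_mul_of_nonpos_right hmass hneg
  have hEb : ∫ x in Icc (3/4) m, ((x-b)^2 : ℝ) ∂P + ∫ x in Ioc m (13/16), ((x-b)^2 : ℝ) ∂P
      = (9/64)*(b-19/24)^2 + 1/17408 := by
    rw [← setIntegral_union IccIocDisj measurableSet_Ioc hIb.integrableOn hIb.integrableOn,
      ← hsplit]
    exact E221' P hP b
  calc (9/64)*(b-19/24)^2 + 1/17408 + (9/64)*((b-a)*(3/2-(a+b)))
      ≤ (∫ x in Icc (3/4) m, ((x-b)^2 : ℝ) ∂P + ∫ x in Ioc m (13/16), ((x-b)^2 : ℝ) ∂P)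
        + (P (Icc (3/4:ℝ) m)).toReal * ((b-a)*(3/2-(a+b))) := by
        rw [hEb]
        linarith [hmle]
    _ ≤ (∫ x in Icc (3/4) m, ((x-b)^2 : ℝ) ∂P + ∫ x in Ioc m (13/16), ((x-b)^2 : ℝ) ∂P)
        + ∫ x in Icc (3/4) m, ((x-a)^2 - (x-b)^2 : ℝ) ∂P := by
        linarith [hconst]
    _ = ∫ x in Icc (3/4) m, ((x-a)^2 : ℝ) ∂P + ∫ x in Ioc m (13/16), ((x-b)^2 : ℝ) ∂P := by
        rw [hLsplit]; ring
    _ ≤ ∫ x in Icc (3/4) m, min ((x-a)^2) ((x-b)^2) ∂P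
        + ∫ x in Ioc m (13/16), min ((x-a)^2) ((x-b)^2) ∂P := add_le_add hL hR
    _ = ∫ x in Icc (3/4:ℝ) (13/16), min ((x-a)^2) ((x-b)^2) ∂P := hsum.symm

/-- THE MAIN LOWER BOUND -/
lemma mainLB (a b : ℝ) (hab : a ≤ b) :
    13/612 ≤ ∫ x, min ((x-a)^2) ((x-b)^2) ∂P := by
  have hImin := intMin hP a b
  have hnn := minnn (P := P) a b
  have mI : ∀ l r : ℝ, MeasurableSet (Icc l r) := fun l r => measurableSet_Icc
  -- bound through a subset family
  rcases le_or_gt (a+b) (1/2) with hs1 | hs1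
  · -- case 1 : s ≤ 1/2 ; J2 -> b
    have hJ2 : ((3/4)*(b-5/6)^2 + 1/51 : ℝ) ≤ ∫ x in Icc (1/2:ℝ) 1, min ((x-a)^2) ((x-b)^2) ∂P := by
      rw [← E2' P hP b]
      refine bndPt hP (mI _ _) a b b fun x hx => ?_
      simp only [mem_Icc] at hx
      refine le_min ?_ le_rfl
      nlinarith [hx.1]
    have htot : ∫ x in Icc (1/2:ℝ) 1, min ((x-a)^2) ((x-b)^2) ∂P
        ≤ ∫ x, min ((x-a)^2) ((x-b)^2) ∂P := setIntegral_le_integral hImin hnn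
    rcases le_or_gt (1/2 : ℝ) b with hb | hb
    · -- also use J1 with constant (b-1/2)^2
      have hJ1 : ((1/4)*(b-1/2)^2 : ℝ) ≤ ∫ x in Icc (0:ℝ) (1/4), min ((x-a)^2) ((x-b)^2) ∂P := by
        have hc : ∫ x in Icc (0:ℝ) (1/4), ((b-1/2)^2 : ℝ) ∂P = (1/4)*(b-1/2)^2 := by
          rw [setIntegral_const, measureReal_def, mass1' P hP]; simp
        rw [← hc]
        refine setIntegral_mono_on (integrableOn_const (measure_ne_top _ _))
          hImin.integrableOn (mI _ _) fun x hx => ?_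
        simp only [mem_Icc] at hx
        refine le_min ?_ ?_ <;> nlinarith [hx.1, hx.2]
      have hsum := sum2le hP hImin hnn (mI 0 (1/4)) (mI (1/2) 1) (IccDisj hP (by norm_num))
      nlinarith [hJ1, hJ2, hsum, sq_nonneg (b - 3/4)]
    · nlinarith [hJ2, htot, sq_nonneg (b-5/6)]
  rcases le_or_gt (a+b) 1 with hs2 | hs2
  · -- case 2 : 1/2 < s ≤ 1 : J1 -> a, J2 -> b
    have hJ1 : ((1/4)*(a-1/6)^2 + 1/612 : ℝ)
        ≤ ∫ x in Icc (0:ℝ) (1/4), min ((x-a)^2) ((x-b)^2) ∂P := by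
      rw [← E1' P hP a]
      refine bndPt hP (mI _ _) a b a fun x hx => ?_
      simp only [mem_Icc] at hx
      refine le_min le_rfl ?_
      nlinarith [hx.2]
    have hJ2 : ((3/4)*(b-5/6)^2 + 1/51 : ℝ)
        ≤ ∫ x in Icc (1/2:ℝ) 1, min ((x-a)^2) ((x-b)^2) ∂P := by
      rw [← E2' P hP b]
      refine bndPt hP (mI _ _) a b b fun x hx => ?_
      simp only [mem_Icc] at hx
      refine le_min ?_ le_rfl
      nlinarith [hx.1]
    have hsum := sum2le hP hImin hnn (mI 0 (1/4)) (mI (1/2) 1) (IccDisj hP (by norm_num))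
    nlinarith [hJ1, hJ2, hsum, sq_nonneg (a-1/6), sq_nonneg (b-5/6)]
  rcases le_or_gt (a+b) (5/4) with hs3 | hs3
  · -- case 3 : 1 < s ≤ 5/4 : J1 -> a, J21 cut, J22(3/4,1) -> b
    have hJ1 : ((1/4)*(a-1/6)^2 + 1/612 : ℝ)
        ≤ ∫ x in Icc (0:ℝ) (1/4), min ((x-a)^2) ((x-b)^2) ∂P := by
      rw [← E1' P hP a]
      refine bndPt hP (mI _ _) a b a fun x hx => ?_
      simp only [mem_Icc] at hx
      refine le_min le_rfl ?_
      nlinarith [hx.2]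
    have hJ21 := cutJ21 hP a b hab (le_of_lt hs2) hs3
    have hJ22 : ((9/16)*(b-11/12)^2 + 1/272 : ℝ)
        ≤ ∫ x in Icc (3/4:ℝ) 1, min ((x-a)^2) ((x-b)^2) ∂P := by
      rw [← E22' P hP b]
      refine bndPt hP (mI _ _) a b b fun x hx => ?_
      simp only [mem_Icc] at hx
      refine le_min ?_ le_rfl
      nlinarith [hx.1]
    have hsum := sum3le hP hImin hnn (mI 0 (1/4)) (mI (1/2) (5/8)) (mI (3/4) 1)
      (IccDisj hP (by norm_num)) (IccDisj hP (by norm_num)) (IccDisj hP (by norm_num))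
    nlinarith [hJ1, hJ21, hJ22, hsum,
      sq_nonneg ((b-a-2/3) + (a+b-1)/2 - (9/16)*(a+b-1)^2),
      mul_nonneg (mul_nonneg (mul_nonneg (by linarith : (0:ℝ) ≤ a+b-1)
        (by linarith : (0:ℝ) ≤ a+b-1)) (by linarith : (0:ℝ) ≤ a+b-1))
        (by linarith : (0:ℝ) ≤ 1/2 - (9/32)*(a+b-1)),
      sq_nonneg (a+b-1)]
  rcases le_or_gt (a+b) (3/2) with hs4 | hs4
  · -- case 4 : 5/4 < s ≤ 3/2 : J1,J21 -> a ; J22 -> b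
    have hJ1 : ((1/4)*(a-1/6)^2 + 1/612 : ℝ)
        ≤ ∫ x in Icc (0:ℝ) (1/4), min ((x-a)^2) ((x-b)^2) ∂P := by
      rw [← E1' P hP a]
      refine bndPt hP (mI _ _) a b a fun x hx => ?_
      simp only [mem_Icc] at hx
      refine le_min le_rfl ?_
      nlinarith [hx.2]
    have hJ21 : ((3/16)*(a-7/12)^2 + 1/3264 : ℝ)
        ≤ ∫ x in Icc (1/2:ℝ) (5/8), min ((x-a)^2) ((x-b)^2) ∂P := by
      rw [← E21' P hP a]
      refine bndPt hP (mI _ _) a b a fun x hx => ?_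
      simp only [mem_Icc] at hx
      refine le_min le_rfl ?_
      nlinarith [hx.2]
    have hJ22 : ((9/16)*(b-11/12)^2 + 1/272 : ℝ)
        ≤ ∫ x in Icc (3/4:ℝ) 1, min ((x-a)^2) ((x-b)^2) ∂P := by
      rw [← E22' P hP b]
      refine bndPt hP (mI _ _) a b b fun x hx => ?_
      simp only [mem_Icc] at hx
      refine le_min ?_ le_rfl
      nlinarith [hx.1]
    have hsum := sum3le hP hImin hnn (mI 0 (1/4)) (mI (1/2) (5/8)) (mI (3/4) 1)
      (IccDisj hP (by norm_num)) (IccDisj hP (by norm_num)) (IccDisj hP (by norm_num))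
    nlinarith [hJ1, hJ21, hJ22, hsum, sq_nonneg (a - 29/84), sq_nonneg (b - 11/12)]
  rcases le_or_gt (a+b) (13/8) with hs5 | hs5
  · -- case 5 : 3/2 < s ≤ 13/8 : J1,J21 -> a ; J221 cut ; J222 -> b
    have hJ1 : ((1/4)*(a-1/6)^2 + 1/612 : ℝ)
        ≤ ∫ x in Icc (0:ℝ) (1/4), min ((x-a)^2) ((x-b)^2) ∂P := by
      rw [← E1' P hP a]
      refine bndPt hP (mI _ _) a b a fun x hx => ?_
      simp only [mem_Icc] at hx
      refine le_min le_rfl ?_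
      nlinarith [hx.2]
    have hJ21 : ((3/16)*(a-7/12)^2 + 1/3264 : ℝ)
        ≤ ∫ x in Icc (1/2:ℝ) (5/8), min ((x-a)^2) ((x-b)^2) ∂P := by
      rw [← E21' P hP a]
      refine bndPt hP (mI _ _) a b a fun x hx => ?_
      simp only [mem_Icc] at hx
      refine le_min le_rfl ?_
      nlinarith [hx.2]
    have hJ221 := cutJ221 hP a b hab (le_of_lt hs4) hs5
    have hJ222 : ((27/64)*(b-23/24)^2 + 3/4352 : ℝ)
        ≤ ∫ x in Icc (7/8:ℝ) 1, min ((x-a)^2) ((x-b)^2) ∂P := by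
      rw [← E222' P hP b]
      refine bndPt hP (mI _ _) a b b fun x hx => ?_
      simp only [mem_Icc] at hx
      refine le_min ?_ le_rfl
      nlinarith [hx.1]
    have hsum := sum4le hP hImin hnn (mI 0 (1/4)) (mI (1/2) (5/8)) (mI (3/4) (13/16))
      (mI (7/8) 1)
      (IccDisj hP (by norm_num)) (IccDisj hP (by norm_num)) (IccDisj hP (by norm_num))
      (IccDisj hP (by norm_num)) (IccDisj hP (by norm_num)) (IccDisj hP (by norm_num))
    nlinarith [hJ1, hJ21, hJ221, hJ222, hsum, sq_nonneg (a - 29/84), sq_nonneg (b - 7/8),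
      sq_nonneg (a-b),
      mul_nonneg (by linarith : (0:ℝ) ≤ b - a) (by linarith : (0:ℝ) ≤ 13/8 - (a+b)),
      sq_nonneg (a - 1/3), sq_nonneg (b - 1)]
  rcases le_or_gt (a+b) (7/4) with hs6 | hs6
  · -- case 6 : 13/8 < s ≤ 7/4 : J1,J21,J221 -> a ; J222 -> b
    have hJ1 : ((1/4)*(a-1/6)^2 + 1/612 : ℝ)
        ≤ ∫ x in Icc (0:ℝ) (1/4), min ((x-a)^2) ((x-b)^2) ∂P := by
      rw [← E1' P hP a]
      refine bndPt hP (mI _ _) a b a fun x hx => ?_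
      simp only [mem_Icc] at hx
      refine le_min le_rfl ?_
      nlinarith [hx.2]
    have hJ21 : ((3/16)*(a-7/12)^2 + 1/3264 : ℝ)
        ≤ ∫ x in Icc (1/2:ℝ) (5/8), min ((x-a)^2) ((x-b)^2) ∂P := by
      rw [← E21' P hP a]
      refine bndPt hP (mI _ _) a b a fun x hx => ?_
      simp only [mem_Icc] at hx
      refine le_min le_rfl ?_
      nlinarith [hx.2]
    have hJ221 : ((9/64)*(a-19/24)^2 + 1/17408 : ℝ)
        ≤ ∫ x in Icc (3/4:ℝ) (13/16), min ((x-a)^2) ((x-b)^2) ∂P := by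
      rw [← E221' P hP a]
      refine bndPt hP (mI _ _) a b a fun x hx => ?_
      simp only [mem_Icc] at hx
      refine le_min le_rfl ?_
      nlinarith [hx.2]
    have hJ222 : ((27/64)*(b-23/24)^2 + 3/4352 : ℝ)
        ≤ ∫ x in Icc (7/8:ℝ) 1, min ((x-a)^2) ((x-b)^2) ∂P := by
      rw [← E222' P hP b]
      refine bndPt hP (mI _ _) a b b fun x hx => ?_
      simp only [mem_Icc] at hx
      refine le_min ?_ le_rfl
      nlinarith [hx.1]
    have hsum := sum4le hP hImin hnn (mI 0 (1/4)) (mI (1/2) (5/8)) (mI (3/4) (13/16))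
      (mI (7/8) 1)
      (IccDisj hP (by norm_num)) (IccDisj hP (by norm_num)) (IccDisj hP (by norm_num))
      (IccDisj hP (by norm_num)) (IccDisj hP (by norm_num)) (IccDisj hP (by norm_num))
    nlinarith [hJ1, hJ21, hJ221, hJ222, hsum, sq_nonneg (a - 403/888), sq_nonneg (b - 23/24)]
  rcases le_or_gt (a+b) 2 with hs7 | hs7
  · -- case 7 : 7/4 < s ≤ 2 : J1,J21,J221 -> a
    have hJ1 : ((1/4)*(a-1/6)^2 + 1/612 : ℝ)
        ≤ ∫ x in Icc (0:ℝ) (1/4), min ((x-a)^2) ((x-b)^2) ∂P := by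
      rw [← E1' P hP a]
      refine bndPt hP (mI _ _) a b a fun x hx => ?_
      simp only [mem_Icc] at hx
      refine le_min le_rfl ?_
      nlinarith [hx.2]
    have hJ21 : ((3/16)*(a-7/12)^2 + 1/3264 : ℝ)
        ≤ ∫ x in Icc (1/2:ℝ) (5/8), min ((x-a)^2) ((x-b)^2) ∂P := by
      rw [← E21' P hP a]
      refine bndPt hP (mI _ _) a b a fun x hx => ?_
      simp only [mem_Icc] at hx
      refine le_min le_rfl ?_
      nlinarith [hx.2]
    have hJ221 : ((9/64)*(a-19/24)^2 + 1/17408 : ℝ)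
        ≤ ∫ x in Icc (3/4:ℝ) (13/16), min ((x-a)^2) ((x-b)^2) ∂P := by
      rw [← E221' P hP a]
      refine bndPt hP (mI _ _) a b a fun x hx => ?_
      simp only [mem_Icc] at hx
      refine le_min le_rfl ?_
      nlinarith [hx.2]
    have hsum := sum3le hP hImin hnn (mI 0 (1/4)) (mI (1/2) (5/8)) (mI (3/4) (13/16))
      (IccDisj hP (by norm_num)) (IccDisj hP (by norm_num)) (IccDisj hP (by norm_num))
    nlinarith [hJ1, hJ21, hJ221, hsum, sq_nonneg (a - 403/888)]
  · -- case 8 : 2 < s : everything -> a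
    have hJ1 : ((1/4)*(a-1/6)^2 + 1/612 : ℝ)
        ≤ ∫ x in Icc (0:ℝ) (1/4), min ((x-a)^2) ((x-b)^2) ∂P := by
      rw [← E1' P hP a]
      refine bndPt hP (mI _ _) a b a fun x hx => ?_
      simp only [mem_Icc] at hx
      refine le_min le_rfl ?_
      nlinarith [hx.2]
    have hJ2 : ((3/4)*(a-5/6)^2 + 1/51 : ℝ)
        ≤ ∫ x in Icc (1/2:ℝ) 1, min ((x-a)^2) ((x-b)^2) ∂P := by
      rw [← E2' P hP a]
      refine bndPt hP (mI _ _) a b a fun x hx => ?_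
      simp only [mem_Icc] at hx
      refine le_min le_rfl ?_
      nlinarith [hx.2]
    have hsum := sum2le hP hImin hnn (mI 0 (1/4)) (mI (1/2) 1) (IccDisj hP (by norm_num))
    nlinarith [hJ1, hJ2, hsum, sq_nonneg (a-1/6), sq_nonneg (a-5/6)]
end

lemma intMin' (P : Measure ℝ) [IsProbabilityMeasure P] (hP : SelfSimilar P) (a b : ℝ) :
    Integrable (fun x => min ((x-a)^2) ((x-b)^2)) P := intMin hP a b
lemma mainLB' (P : Measure ℝ) [IsProbabilityMeasure P] (hP : SelfSimilar P) (a b : ℝ)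
    (hab : a ≤ b) : 13/612 ≤ ∫ x, min ((x-a)^2) ((x-b)^2) ∂P := mainLB hP a b hab
section
variable (hP : SelfSimilar P)
include hP

/-- value at the candidate optimal pair -/
lemma valueOpt : ∫ x, min ((x-(1/6:ℝ))^2) ((x-(5/6:ℝ))^2) ∂P = 13/612 := by
  set f := fun x : ℝ => min ((x-(1/6:ℝ))^2) ((x-(5/6:ℝ))^2) with hf
  have hImin := intMin' P hP (1/6) (5/6)
  have hU : MeasurableSet (Icc (0:ℝ) (1/4) ∪ Icc (1/2:ℝ) 1) :=
    measurableSet_Icc.union measurableSet_Icc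
  have hcompl : P ((Icc (0:ℝ) (1/4) ∪ Icc (1/2:ℝ) 1)ᶜ) = 0 := by
    have hsub : (Icc (0:ℝ) (1/4) ∪ Icc (1/2:ℝ) 1)ᶜ ⊆ (Icc (0:ℝ) 1)ᶜ ∪ Ioo (1/4:ℝ) (1/2) := by
      intro x hx
      simp only [mem_compl_iff, mem_union, mem_Icc, not_or, not_and_or, not_le] at hx
      simp only [mem_union, mem_compl_iff, mem_Icc, not_and_or, not_le, mem_Ioo]
      rcases hx with ⟨h1, h2⟩
      rcases h1 with h1 | h1
      · exact Or.inl (Or.inl h1)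
      rcases h2 with h2 | h2
      · exact Or.inr ⟨h1, h2⟩
      · exact Or.inl (Or.inr h2)
    exact measure_mono_null hsub (measure_union_null (h01' P hP) (gapNull' P hP))
  have hsplit : ∫ x, f x ∂P
      = ∫ x in Icc (0:ℝ) (1/4), f x ∂P + ∫ x in Icc (1/2:ℝ) 1, f x ∂P := by
    have h1 := integral_add_compl hU hImin
    rw [Measure.restrict_eq_zero.mpr hcompl, integral_zero_measure, add_zero] at h1
    rw [← h1, setIntegral_union ?_ measurableSet_Icc hImin.integrableOn hImin.integrableOn]
    · rw [Set.disjoint_left]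
      intro x h1 h2
      simp only [mem_Icc] at h1 h2
      linarith [h1.2, h2.1]
  have e1 : ∫ x in Icc (0:ℝ) (1/4), f x ∂P = ∫ x in Icc (0:ℝ) (1/4), (x-(1/6:ℝ))^2 ∂P := by
    refine setIntegral_congr_fun measurableSet_Icc fun x hx => ?_
    simp only [mem_Icc] at hx
    simp only [hf]
    refine min_eq_left ?_
    nlinarith [hx.2]
  have e2 : ∫ x in Icc (1/2:ℝ) 1, f x ∂P = ∫ x in Icc (1/2:ℝ) 1, (x-(5/6:ℝ))^2 ∂P := by
    refine setIntegral_congr_fun measurableSet_Icc fun x hx => ?_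
    simp only [mem_Icc] at hx
    simp only [hf]
    refine min_eq_right ?_
    nlinarith [hx.1]
  rw [hsplit, e1, e2, E1' P hP, E2' P hP]
  norm_num

/-- distortion of a singleton -/
lemma distSingle (c : ℝ) : distortion P {c} = (c-2/3)^2 + 16/153 := by
  unfold distortion
  have e : (fun x : ℝ => sInf ((fun a => (x - a) ^ 2) '' (({c} : Finset ℝ) : Set ℝ)))
      = fun x => (x-c)^2 := by
    funext x
    rw [Finset.coe_singleton, Set.image_singleton, csInf_singleton]
  rw [e]
  have e2 : (fun x : ℝ => (x-c)^2) = fun x => 1*x^2 + (-2*c)*x + c^2 := by funext x; ring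
  rw [e2, evalQuadM P hP]
  ring

/-- distortion of a pair equals the min integral -/
lemma distPair (a b : ℝ) (hne : a ≠ b) :
    distortion P {a, b} = ∫ x, min ((x-a)^2) ((x-b)^2) ∂P := by
  unfold distortion
  congr 1
  funext x
  rw [Finset.coe_insert, Finset.coe_singleton, Set.image_insert_eq, Set.image_singleton]
  exact csInf_pair _ _

lemma distLB (α : Finset ℝ) (hne : α.Nonempty) (hcard : α.card ≤ 2) :
    13/612 ≤ distortion P α := by
  have hpos : 1 ≤ α.card := Finset.card_pos.mpr hne
  interval_cases h : α.card
  · -- card = 1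
    obtain ⟨c, rfl⟩ := Finset.card_eq_one.mp h
    rw [distSingle hP c]
    nlinarith [sq_nonneg (c-2/3)]
  · -- card = 2
    obtain ⟨x, y, hxy, rfl⟩ := Finset.card_eq_two.mp h
    rcases le_total x y with hle | hle
    · rw [distPair hP x y hxy]
      exact mainLB' P hP x y hle
    · rw [Finset.pair_comm, distPair hP y x (Ne.symm hxy)]
      exact mainLB' P hP y x hle

theorem final : IsOptimal P 2 ({1/6, 5/6} : Finset ℝ) ∧ qError P 2 = 13/612 := by
  have hdist : distortion P ({1/6, 5/6} : Finset ℝ) = 13/612 :=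
    (distPair hP (1/6) (5/6) (by norm_num)).trans (valueOpt hP)
  set S := {e | ∃ α : Finset ℝ, α.Nonempty ∧ α.card ≤ 2 ∧ e = distortion P α} with hS
  have hmem : (13/612 : ℝ) ∈ S :=
    ⟨({1/6, 5/6} : Finset ℝ), Finset.insert_nonempty _ _,
      le_trans (Finset.card_insert_le _ _) (by simp), hdist.symm⟩
  have hlb : ∀ e ∈ S, (13/612 : ℝ) ≤ e := by
    rintro e ⟨α, h1, h2, rfl⟩
    exact distLB hP α h1 h2
  have hq : qError P 2 = 13/612 := by
    unfold qError
    exact le_antisymm (csInf_le ⟨13/612, hlb⟩ hmem) (le_csInf ⟨_, hmem⟩ hlb)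
  exact ⟨⟨Finset.insert_nonempty _ _, le_trans (Finset.card_insert_le _ _) (by simp),
    hdist.trans hq.symm⟩, hq⟩
end

end QuantizationProof

theorem stmt_8 (P : Measure ℝ) [IsProbabilityMeasure P] (hP : SelfSimilar P) :
    IsOptimal P 2 ({1 / 6, 5 / 6} : Finset ℝ) ∧ qError P 2 = 13 / 612 :=
  final hP
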